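/- arXiv:2004.09865 — 2 statements merged into one kernel-verified Lean document; each statement's English description precedes it below -/
import Mathlib

section
/- (Lemma 2, Weak duality) Let x ∈ X be a feasible solution of the primal linear copositive problem min cᵀx s.t. A(x) ∈ COP^p, and let (U_m, W_m, D_m, m = 1,…,m₀; U) be a feasible solution of the extended dual problem, i.e., U ∈ CP^p, W_0 = 0 (the p×p zero matrix), the block matrices [[U_m, W_m],[W_mᵀ, D_m]] belong to CP^{2p} for m = 1,…,m₀, (U_m + W_{m−1})•A_j = 0 for j = 0,1,…,n and m = 1,…,m₀, and (U + W_{m₀})•A_j = c_j for j = 1,…,n (with W_{m₀} interpreted as 0 when m₀ = 0). Then cᵀx ≥ −(U + W_{m₀})•A_0. -/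
open Matrix

/-- The constraint matrix function `𝓐(x) = A₀ + ∑ i xᵢ Aᵢ`. -/
def Amap (p n : ℕ) (A₀ : Matrix (Fin p) (Fin p) ℝ)
    (A : Fin n → Matrix (Fin p) (Fin p) ℝ) (x : Fin n → ℝ) :
    Matrix (Fin p) (Fin p) ℝ :=
  A₀ + ∑ i, x i • A i

/-- The feasible set `X = {x : tᵀ𝓐(x)t ≥ 0 ∀ t ∈ ℝ₊ᵖ}`. -/
def feasSet (p n : ℕ) (A₀ : Matrix (Fin p) (Fin p) ℝ)
    (A : Fin n → Matrix (Fin p) (Fin p) ℝ) : Set (Fin n → ℝ) :=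
  {x | ∀ t : Fin p → ℝ, (∀ k, 0 ≤ t k) → 0 ≤ t ⬝ᵥ (Amap p n A₀ A x *ᵥ t)}

/-- The normalized immobile index set `T_im = {t ∈ T : tᵀ𝓐(x)t = 0 ∀ x ∈ X}`. -/
def normImmobile (p n : ℕ) (A₀ : Matrix (Fin p) (Fin p) ℝ)
    (A : Fin n → Matrix (Fin p) (Fin p) ℝ) : Set (Fin p → ℝ) :=
  {t | (∀ k, 0 ≤ t k) ∧ (∑ k, t k) = 1 ∧
    ∀ x ∈ feasSet p n A₀ A, t ⬝ᵥ (Amap p n A₀ A x *ᵥ t) = 0}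

/-- The immobile index set `R_im = {t ∈ ℝ₊ᵖ : tᵀ𝓐(x)t = 0 ∀ x ∈ X}`. -/
def immobile (p n : ℕ) (A₀ : Matrix (Fin p) (Fin p) ℝ)
    (A : Fin n → Matrix (Fin p) (Fin p) ℝ) : Set (Fin p → ℝ) :=
  {t | (∀ k, 0 ≤ t k) ∧ ∀ x ∈ feasSet p n A₀ A, t ⬝ᵥ (Amap p n A₀ A x *ᵥ t) = 0}

/-- The cone of completely positive matrices `CP = conv{vvᵀ : v ≥ 0}`. -/
def CPcone (ι : Type) [Fintype ι] : Set (Matrix ι ι ℝ) :=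
  convexHull ℝ {M | ∃ v : ι → ℝ, (∀ k, 0 ≤ v k) ∧ M = Matrix.vecMulVec v v}

/-! The trace pairing of a completely positive matrix with a copositive one is
nonnegative. Pair every dual block with the copositive matrix `[[B, εB], [εB, ε²B]]`, where
`B = 𝓐(x)`: this gives `0 ≤ U_m • B + 2ε W_m • B + ε² D_m • B` for all `ε ≥ 0`. By induction on
`m`, `W_{m-1} • B ≥ 0`, so the zero conditions force `U_m • B = 0`, and letting `ε → 0` gives
`W_m • B ≥ 0`. Hence `(U + W_{m₀}) • B ≥ 0`, which expands to `cᵀx + (U + W_{m₀}) • A₀ ≥ 0`. -/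

def IsCopositive {ι : Type} [Fintype ι] (B : Matrix ι ι ℝ) : Prop :=
  ∀ t : ι → ℝ, (∀ k, 0 ≤ t k) → 0 ≤ t ⬝ᵥ (B *ᵥ t)

section Copositive

variable {ι : Type} [Fintype ι]

theorem Matrix.trace_fromBlocks {κ : Type} [Fintype κ] (P : Matrix ι ι ℝ) (Q : Matrix ι κ ℝ)
    (R : Matrix κ ι ℝ) (S : Matrix κ κ ℝ) :
    (fromBlocks P Q R S).trace = P.trace + S.trace := by
  simp [Matrix.trace, Fintype.sum_sum_type]

theorem trace_vecMulVec_mul (v : ι → ℝ) (B : Matrix ι ι ℝ) :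
    (vecMulVec v v * B).trace = v ⬝ᵥ (B *ᵥ v) := by
  rw [vecMulVec_mul, trace_vecMulVec, dotProduct_mulVec, dotProduct_comm]

theorem IsCopositive.trace_mul_nonneg {P B : Matrix ι ι ℝ} (hB : IsCopositive B)
    (hP : P ∈ CPcone ι) : 0 ≤ (P * B).trace := by
  have hlin : IsLinearMap ℝ fun M : Matrix ι ι ℝ ↦ (M * B).trace :=
    ((traceLinearMap ι ℝ ℝ).comp (LinearMap.mulRight ℝ B)).isLinear
  refine convexHull_min ?_ (convex_halfSpace_ge hlin 0) hP
  rintro _ ⟨v, hv, rfl⟩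
  exact (hB v hv).trans_eq (trace_vecMulVec_mul v B).symm

/-- The quadratic form of this block matrix at `(u, v)` is that of `B` at `u + ε v`. -/
theorem IsCopositive.fromBlocks_smul {B : Matrix ι ι ℝ} (hB : IsCopositive B) {ε : ℝ}
    (hε : 0 ≤ ε) : IsCopositive (fromBlocks B (ε • B) (ε • B) (ε ^ 2 • B)) := by
  intro z hz
  obtain ⟨u, v, rfl⟩ : ∃ u v, z = Sum.elim u v := ⟨_, _, (Sum.elim_comp_inl_inr z).symm⟩
  have hquad : u ⬝ᵥ (B *ᵥ u + (ε • B) *ᵥ v) + v ⬝ᵥ ((ε • B) *ᵥ u + (ε ^ 2 • B) *ᵥ v) =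
      (u + ε • v) ⬝ᵥ (B *ᵥ (u + ε • v)) := by
    simp only [smul_mulVec, mulVec_add, mulVec_smul, dotProduct_add, add_dotProduct,
      dotProduct_smul, smul_dotProduct, smul_eq_mul]
    ring
  rw [fromBlocks_mulVec, Sum.elim_comp_inl, Sum.elim_comp_inr, sumElim_dotProduct_sumElim, hquad]
  exact hB _ fun k ↦ add_nonneg (hz (.inl k)) (mul_nonneg hε (hz (.inr k)))

theorem trace_fromBlocks_mul_fromBlocks_smul {P W D B : Matrix ι ι ℝ} (hB : B.IsSymm) (ε : ℝ) :
    (fromBlocks P W Wᵀ D * fromBlocks B (ε • B) (ε • B) (ε ^ 2 • B)).trace =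
      (P * B).trace + 2 * ε * (W * B).trace + ε ^ 2 * (D * B).trace := by
  have hWt : (Wᵀ * B).trace = (W * B).trace := by
    rw [← trace_transpose, transpose_mul, transpose_transpose, hB.eq, trace_mul_comm]
  rw [fromBlocks_multiply, Matrix.trace_fromBlocks]
  simp only [Matrix.mul_smul, trace_add, trace_smul, smul_eq_mul, hWt]
  ring

theorem nonneg_of_forall_pos_two_mul_add_sq_mul_nonneg {a b : ℝ}
    (h : ∀ ε : ℝ, 0 < ε → 0 ≤ 2 * ε * a + ε ^ 2 * b) : 0 ≤ a := by
  by_contra! ha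
  set ε := -a / (|b| + 1)
  have hε : 0 < ε := div_pos (neg_pos.mpr ha) (by positivity)
  have hεb : ε * (|b| + 1) = -a := div_mul_cancel₀ _ (by positivity)
  nlinarith [h ε hε, le_abs_self b, mul_pos hε hε]

theorem IsCopositive.trace_mul_nonneg_of_fromBlocks {B U W D : Matrix ι ι ℝ}
    (hB : IsCopositive B) (hBs : B.IsSymm) (hblock : fromBlocks U W Wᵀ D ∈ CPcone (ι ⊕ ι))
    (hU : (U * B).trace ≤ 0) : 0 ≤ (W * B).trace := by
  have hquad (ε : ℝ) (hε : 0 ≤ ε) :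
      0 ≤ (U * B).trace + 2 * ε * (W * B).trace + ε ^ 2 * (D * B).trace := by
    rw [← trace_fromBlocks_mul_fromBlocks_smul hBs]
    exact (hB.fromBlocks_smul hε).trace_mul_nonneg hblock
  have hU0 : (U * B).trace = 0 := le_antisymm hU (by simpa using hquad 0 le_rfl)
  refine nonneg_of_forall_pos_two_mul_add_sq_mul_nonneg (b := (D * B).trace) fun ε hε ↦ ?_
  simpa [hU0] using hquad ε hε.le

theorem IsCopositive.trace_mul_nonneg_of_dual_chain {B : Matrix ι ι ℝ} (hB : IsCopositive B)
    (hBs : B.IsSymm) {m₀ : ℕ} {Um Wm Dm : ℕ → Matrix ι ι ℝ} (hW0 : Wm 0 = 0)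
    (hblocks : ∀ m, 1 ≤ m → m ≤ m₀ → fromBlocks (Um m) (Wm m) (Wm m)ᵀ (Dm m) ∈ CPcone (ι ⊕ ι))
    (hzero : ∀ m, 1 ≤ m → m ≤ m₀ → ((Um m + Wm (m - 1)) * B).trace = 0) :
    ∀ m ≤ m₀, 0 ≤ (Wm m * B).trace := by
  intro m hm
  induction m with
  | zero => simp [hW0]
  | succ k ih =>
    have hk := hzero (k + 1) (by omega) hm
    rw [Nat.add_sub_cancel, add_mul, trace_add] at hk
    exact hB.trace_mul_nonneg_of_fromBlocks hBs (hblocks (k + 1) (by omega) hm)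
      (by linarith [ih (by omega)])

end Copositive

theorem isSymm_Amap {p n : ℕ} {A₀ : Matrix (Fin p) (Fin p) ℝ}
    {A : Fin n → Matrix (Fin p) (Fin p) ℝ} (hA₀ : A₀.IsSymm) (hA : ∀ i, (A i).IsSymm)
    (x : Fin n → ℝ) : (Amap p n A₀ A x).IsSymm := by
  unfold Amap IsSymm
  rw [transpose_add, transpose_sum, hA₀.eq]
  simp only [transpose_smul, (hA _).eq]

theorem trace_mul_Amap {p n : ℕ} (A₀ : Matrix (Fin p) (Fin p) ℝ)
    (A : Fin n → Matrix (Fin p) (Fin p) ℝ) (x : Fin n → ℝ) (Y : Matrix (Fin p) (Fin p) ℝ) :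
    (Y * Amap p n A₀ A x).trace = (Y * A₀).trace + ∑ j, x j * (Y * A j).trace := by
  simp [Amap, Matrix.mul_add, Matrix.mul_sum, trace_sum]

theorem weak_duality_general (p n : ℕ) (m₀ : ℕ)
    (A₀ : Matrix (Fin p) (Fin p) ℝ) (A : Fin n → Matrix (Fin p) (Fin p) ℝ)
    (hA₀ : A₀.IsSymm) (hA : ∀ i, (A i).IsSymm) (c : Fin n → ℝ)
    (x : Fin n → ℝ) (hx : x ∈ feasSet p n A₀ A)
    (U : Matrix (Fin p) (Fin p) ℝ) (Um Wm Dm : ℕ → Matrix (Fin p) (Fin p) ℝ)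
    (hU : U ∈ CPcone (Fin p)) (hW0 : Wm 0 = 0)
    (hblocks : ∀ m, 1 ≤ m → m ≤ m₀ →
      Matrix.fromBlocks (Um m) (Wm m) (Wm m)ᵀ (Dm m) ∈ CPcone (Fin p ⊕ Fin p))
    (hzero : ∀ m, 1 ≤ m → m ≤ m₀ →
      ((Um m + Wm (m - 1)) * A₀).trace = 0 ∧
      ∀ j : Fin n, ((Um m + Wm (m - 1)) * A j).trace = 0)
    (hc : ∀ j : Fin n, ((U + Wm m₀) * A j).trace = c j) :
    -((U + Wm m₀) * A₀).trace ≤ ∑ j, c j * x j := by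
  have hB : IsCopositive (Amap p n A₀ A x) := hx
  have hW : 0 ≤ (Wm m₀ * Amap p n A₀ A x).trace := by
    refine hB.trace_mul_nonneg_of_dual_chain (isSymm_Amap hA₀ hA x) hW0 hblocks
      (fun m h1 h2 ↦ ?_) m₀ le_rfl
    simp [trace_mul_Amap, hzero m h1 h2]
  have hpair : ((U + Wm m₀) * Amap p n A₀ A x).trace =
      ((U + Wm m₀) * A₀).trace + ∑ j, c j * x j := by
    simp only [trace_mul_Amap, hc, mul_comm]
  have hUB := hB.trace_mul_nonneg hU
  rw [add_mul, trace_add] at hpair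
  linarith

/-- Lemma 2, weak duality: if `x ∈ X` is primal feasible and
`(U_m, W_m, D_m, m = 1,…,m₀; U)` is feasible for the extended dual problem
(with the convention `W_0 = 0`, so `W_{m₀} = 0` when `m₀ = 0`), then
`cᵀx ≥ −(U + W_{m₀}) • A₀`. -/
theorem weak_duality (p n : ℕ) (hp : 1 ≤ p) (hn : 1 ≤ n) (m₀ : ℕ)
    (A₀ : Matrix (Fin p) (Fin p) ℝ) (A : Fin n → Matrix (Fin p) (Fin p) ℝ)
    (hA₀ : A₀.IsSymm) (hA : ∀ i, (A i).IsSymm) (c : Fin n → ℝ)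
    (x : Fin n → ℝ) (hx : x ∈ feasSet p n A₀ A)
    (U : Matrix (Fin p) (Fin p) ℝ) (Um Wm Dm : ℕ → Matrix (Fin p) (Fin p) ℝ)
    (hU : U ∈ CPcone (Fin p)) (hW0 : Wm 0 = 0)
    (hblocks : ∀ m, 1 ≤ m → m ≤ m₀ →
      Matrix.fromBlocks (Um m) (Wm m) (Wm m)ᵀ (Dm m) ∈ CPcone (Fin p ⊕ Fin p))
    (hzero : ∀ m, 1 ≤ m → m ≤ m₀ →
      ((Um m + Wm (m - 1)) * A₀).trace = 0 ∧
      ∀ j : Fin n, ((Um m + Wm (m - 1)) * A j).trace = 0)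
    (hc : ∀ j : Fin n, ((U + Wm m₀) * A j).trace = c j) :
    -((U + Wm m₀) * A₀).trace ≤ ∑ j, c j * x j :=
  weak_duality_general p n m₀ A₀ A hA₀ hA c x hx U Um Wm Dm hU hW0 hblocks hzero hc
end

section
/- (Modified index remains immobile in Procedure DAM) Let τ_s, τ_i ∈ T_im and θ ∈ (0,1), and suppose τ̄ = (τ_s − θ τ_i)/(1 − θ) has all components nonnegative. Then eᵀτ̄ = 1 and τ̄ ∈ T_im, i.e., τ̄ᵀA(x)τ̄ = 0 for all x ∈ X. -/
open Matrix

/-! If `x ∈ X`, the form `q(t) = tᵀA(x)t` is nonnegative on `ℝ₊ᵖ` and vanishes at `τ_i`, so along the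
ray `τ̄ + s τ_i` (`s ≥ 0`) it is an affine function of `s` that is nonnegative. It vanishes at
`s = θ/(1-θ)`, where the ray passes through `τ_s/(1-θ)`; an affine function that is nonnegative on
`[0, ∞)` and vanishes at an interior point is zero, so `q(τ̄) = 0`. -/

namespace Matrix

variable {ι R : Type*} [Fintype ι]

def IsCopositive [Semiring R] [PartialOrder R] (M : Matrix ι ι R) : Prop :=
  ∀ t : ι → R, 0 ≤ t → 0 ≤ t ⬝ᵥ (M *ᵥ t)

theorem add_smul_dotProduct_mulVec_add_smul [CommRing R] (M : Matrix ι ι R) (a : ι → R)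
    {b : ι → R} (hb : b ⬝ᵥ (M *ᵥ b) = 0) (s : R) :
    (a + s • b) ⬝ᵥ (M *ᵥ (a + s • b)) =
      a ⬝ᵥ (M *ᵥ a) + s * (a ⬝ᵥ (M *ᵥ b) + b ⬝ᵥ (M *ᵥ a)) := by
  simp only [mulVec_add, mulVec_smul, dotProduct_add, add_dotProduct, dotProduct_smul,
    smul_dotProduct, smul_eq_mul, hb]
  ring

theorem IsCopositive.dotProduct_mulVec_eq_zero_of_add_smul [Field R] [LinearOrder R]
    [IsStrictOrderedRing R] {M : Matrix ι ι R} (hM : M.IsCopositive) {a b : ι → R}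
    (ha : 0 ≤ a) (hb : 0 ≤ b) (hbM : b ⬝ᵥ (M *ᵥ b) = 0) {s : R} (hs : 0 < s)
    (hab : (a + s • b) ⬝ᵥ (M *ᵥ (a + s • b)) = 0) :
    a ⬝ᵥ (M *ᵥ a) = 0 := by
  have h2s := hM (a + (2 * s) • b) (add_nonneg ha (smul_nonneg (by positivity) hb))
  rw [add_smul_dotProduct_mulVec_add_smul M a hbM] at hab h2s
  linarith [hM a ha]

end Matrix

theorem dam_modified_index_immobile_general (p n : ℕ)
    (A₀ : Matrix (Fin p) (Fin p) ℝ) (A : Fin n → Matrix (Fin p) (Fin p) ℝ)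
    (τs τi : Fin p → ℝ)
    (hτs : τs ∈ normImmobile p n A₀ A) (hτi : τi ∈ normImmobile p n A₀ A)
    (θ : ℝ) (hθ : θ ∈ Set.Ioo (0 : ℝ) 1)
    (hnn : ∀ k, 0 ≤ ((1 - θ)⁻¹ • (τs - θ • τi)) k) :
    (∑ k, ((1 - θ)⁻¹ • (τs - θ • τi)) k) = 1 ∧
      ((1 - θ)⁻¹ • (τs - θ • τi)) ∈ normImmobile p n A₀ A := by
  obtain ⟨-, hsum_s, hs⟩ := hτs
  obtain ⟨hτi_nn, hsum_i, hi⟩ := hτi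
  have h1θ : 0 < 1 - θ := sub_pos.2 hθ.2
  have hsum : ∑ k, ((1 - θ)⁻¹ • (τs - θ • τi)) k = 1 := by
    simp only [Pi.smul_apply, Pi.sub_apply, smul_eq_mul, ← Finset.mul_sum, Finset.sum_sub_distrib,
      hsum_s, hsum_i]
    field_simp
  have hray : (1 - θ)⁻¹ • (τs - θ • τi) + (θ / (1 - θ)) • τi = (1 - θ)⁻¹ • τs := by
    module
  refine ⟨hsum, hnn, hsum, fun x hx => ?_⟩
  refine Matrix.IsCopositive.dotProduct_mulVec_eq_zero_of_add_smul hx hnn hτi_nn (hi x hx)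
    (div_pos hθ.1 h1θ) ?_
  simp [hray, Matrix.mulVec_smul, hs x hx]

/-- modified index remains immobile in Procedure DAM: if
`τ_s, τ_i ∈ T_im`, `θ ∈ (0,1)` and `τ̄ = (τ_s − θ τ_i)/(1 − θ)` is componentwise
nonnegative, then `eᵀτ̄ = 1` and `τ̄ ∈ T_im` (i.e. `τ̄ᵀ𝓐(x)τ̄ = 0` for all `x ∈ X`). -/
theorem dam_modified_index_immobile (p n : ℕ) (hp : 1 ≤ p) (hn : 1 ≤ n)
    (A₀ : Matrix (Fin p) (Fin p) ℝ) (A : Fin n → Matrix (Fin p) (Fin p) ℝ)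
    (hA₀ : A₀.IsSymm) (hA : ∀ i, (A i).IsSymm)
    (τs τi : Fin p → ℝ)
    (hτs : τs ∈ normImmobile p n A₀ A) (hτi : τi ∈ normImmobile p n A₀ A)
    (θ : ℝ) (hθ : θ ∈ Set.Ioo (0 : ℝ) 1)
    (hnn : ∀ k, 0 ≤ ((1 - θ)⁻¹ • (τs - θ • τi)) k) :
    (∑ k, ((1 - θ)⁻¹ • (τs - θ • τi)) k) = 1 ∧
      ((1 - θ)⁻¹ • (τs - θ • τi)) ∈ normImmobile p n A₀ A :=
  dam_modified_index_immobile_general p n A₀ A τs τi hτs hτi θ hθ hnn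
end
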